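/- arXiv:2410.21625 — 2 statements merged into one kernel-verified Lean document; each statement's English description precedes it below -/
import Mathlib

section
/- Let 1 ≤ k ≤ n, A ∈ ℂ^{n×n}, and let f ∈ ℝ[t,x,y] be a polynomial such that f(λ_k(x,y), −x, −y) = 0 for all (x,y) ∈ ℝ². Let (x*,y*) ∈ ℝ² and set p = (λ_k(x*,y*), −x*, −y*). If (∂f/∂t)(p) ≠ 0, then the function (x,y) ↦ λ_k(x,y) is differentiable at (x*,y*) with partial derivatives ∂λ_k/∂x (x*,y*) = (∂f/∂x)(p) / (∂f/∂t)(p) and ∂λ_k/∂y (x*,y*) = (∂f/∂y)(p) / (∂f/∂t)(p). -/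
open Matrix

noncomputable section

/-- The Hermitian real part `(A + Aᴴ)/2` of a complex matrix. -/
def ReM {n : ℕ} (A : Matrix (Fin n) (Fin n) ℂ) : Matrix (Fin n) (Fin n) ℂ :=
  (2⁻¹ : ℂ) • (A + Aᴴ)

/-- The Hermitian imaginary part `(A - Aᴴ)/(2i)` of a complex matrix. -/
def ImM {n : ℕ} (A : Matrix (Fin n) (Fin n) ℂ) : Matrix (Fin n) (Fin n) ℂ :=
  ((2 * Complex.I)⁻¹ : ℂ) • (A - Aᴴ)

/-- The `k`-th largest eigenvalue (for `1 ≤ k ≤ n`) of a Hermitian `n × n` matrix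
(with junk value `0` for non-Hermitian input): the eigenvalues sorted in increasing
order, evaluated at index `n - k`. -/
def kthEig {n : ℕ} (M : Matrix (Fin n) (Fin n) ℂ) (k : ℕ) : ℝ :=
  if hM : M.IsHermitian then
    if h : n - k < n then (hM.eigenvalues ∘ Tuple.sort hM.eigenvalues) ⟨n - k, h⟩ else 0
  else 0

/-- `λ_k(x,y) = λ_k(x·Re A + y·Im A)`. -/
def lamXY {n : ℕ} (A : Matrix (Fin n) (Fin n) ℂ) (k : ℕ) (x y : ℝ) : ℝ :=
  kthEig ((x : ℂ) • ReM A + (y : ℂ) • ImM A) k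

/-- `λ_k(θ) = λ_k(cos θ · Re A + sin θ · Im A)`. -/
def lamTheta {n : ℕ} (A : Matrix (Fin n) (Fin n) ℂ) (k : ℕ) (θ : ℝ) : ℝ :=
  lamXY A k (Real.cos θ) (Real.sin θ)

/-- The rank-`k` numerical range, via the Li–Sze halfplane description:
`Λ_k(A) = {a + ib : a cos θ + b sin θ ≤ λ_k(θ) for all θ}`. -/
def NumRange {n : ℕ} (A : Matrix (Fin n) (Fin n) ℂ) (k : ℕ) : Set ℂ :=
  {z : ℂ | ∀ θ : ℝ, z.re * Real.cos θ + z.im * Real.sin θ ≤ lamTheta A k θ}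


/-!
Comparing the Rayleigh quotients of two Hermitian matrices on a nonzero vector in the
intersection of the span of the top `n - j` eigenvectors of one with the span of the bottom
`j + 1` eigenvectors of the other (Courant–Fischer) gives Weyl's inequality: each sorted
eigenvalue is `1`-Lipschitz for the operator norm. Hence `λ_k(x, y)` is Lipschitz in `(x, y)`.
Since `f` vanishes along the graph `w ↦ (λ_k(w), -w)`, the first-order expansion of `f` at `p`
together with the Lipschitz bound makes
`∂f/∂t(p) · (λ_k(w) - λ_k(w₀)) - ∂f/∂x(p) · (w - w₀).1 - ∂f/∂y(p) · (w - w₀).2`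
a `o(‖w - w₀‖)`, which is differentiability with the implicit-function formula for the derivative.
-/

open scoped InnerProductSpace Matrix.Norms.L2Operator Topology

namespace OrthonormalBasis

variable {𝕜 E ι : Type*} [RCLike 𝕜] [NormedAddCommGroup E] [InnerProductSpace 𝕜 E] [Fintype ι]
  (b : OrthonormalBasis ι 𝕜 E) {T : E →ₗ[𝕜] E} {μ : ι → ℝ}

lemma inner_eq_zero_of_mem_span_image {s : Set ι} {x : E}
    (hx : x ∈ Submodule.span 𝕜 (b '' s)) {i : ι} (hi : i ∉ s) : ⟪b i, x⟫_𝕜 = 0 := by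
  have hker : b '' s ⊆ LinearMap.ker (innerₛₗ 𝕜 (b i)) := by
    rintro _ ⟨j, hj, rfl⟩
    exact b.orthonormal.2 (ne_of_mem_of_not_mem hj hi).symm
  exact Submodule.span_le.mpr hker hx

lemma finrank_span_image (s : Set ι) [Fintype s] :
    Module.finrank 𝕜 (Submodule.span 𝕜 (b '' s)) = Fintype.card s := by
  rw [Set.image_eq_range]
  exact finrank_span_eq_card (b.orthonormal.linearIndependent.comp _ Subtype.val_injective)

lemma re_inner_map_self_eq_sum (hT : ∀ i, T (b i) = (μ i : 𝕜) • b i) (x : E) :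
    RCLike.re ⟪x, T x⟫_𝕜 = ∑ i, μ i * ‖⟪b i, x⟫_𝕜‖ ^ 2 := by
  have hTx : T x = ∑ i, (⟪b i, x⟫_𝕜 * μ i) • b i := by
    conv_lhs => rw [← b.sum_repr' x]
    simp only [map_sum, map_smul, hT, smul_smul]
  rw [hTx, inner_sum, map_sum]
  refine Finset.sum_congr rfl fun i _ => ?_
  rw [inner_smul_right, ← inner_conj_symm x, mul_right_comm, RCLike.mul_conj, mul_comm]
  norm_cast

lemma mul_norm_sq_le_re_inner_map_self (hT : ∀ i, T (b i) = (μ i : 𝕜) • b i) {s : Set ι} {r : ℝ}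
    (hs : ∀ i ∈ s, r ≤ μ i) {x : E} (hx : x ∈ Submodule.span 𝕜 (b '' s)) :
    r * ‖x‖ ^ 2 ≤ RCLike.re ⟪x, T x⟫_𝕜 := by
  rw [b.re_inner_map_self_eq_sum hT, ← b.sum_sq_norm_inner_right, Finset.mul_sum]
  refine Finset.sum_le_sum fun i _ => ?_
  by_cases hi : i ∈ s
  · exact mul_le_mul_of_nonneg_right (hs i hi) (by positivity)
  · simp [b.inner_eq_zero_of_mem_span_image hx hi]

lemma re_inner_map_self_le_mul_norm_sq (hT : ∀ i, T (b i) = (μ i : 𝕜) • b i) {s : Set ι} {r : ℝ}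
    (hs : ∀ i ∈ s, μ i ≤ r) {x : E} (hx : x ∈ Submodule.span 𝕜 (b '' s)) :
    RCLike.re ⟪x, T x⟫_𝕜 ≤ r * ‖x‖ ^ 2 := by
  rw [b.re_inner_map_self_eq_sum hT, ← b.sum_sq_norm_inner_right, Finset.mul_sum]
  refine Finset.sum_le_sum fun i _ => ?_
  by_cases hi : i ∈ s
  · exact mul_le_mul_of_nonneg_right (hs i hi) (by positivity)
  · simp [b.inner_eq_zero_of_mem_span_image hx hi]

end OrthonormalBasis

section MinMax

variable {𝕜 E : Type*} [RCLike 𝕜] [NormedAddCommGroup E] [InnerProductSpace 𝕜 E] {n : ℕ}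
  {T T' : E →ₗ[𝕜] E} {b b' : OrthonormalBasis (Fin n) 𝕜 E} {μ μ' : Fin n → ℝ}

theorem le_add_of_re_inner_map_self_le (hμ : Monotone μ) (hμ' : Monotone μ')
    (hT : ∀ i, T (b i) = (μ i : 𝕜) • b i) (hT' : ∀ i, T' (b' i) = (μ' i : 𝕜) • b' i) {c : ℝ}
    (hc : ∀ x, RCLike.re ⟪x, T x⟫_𝕜 ≤ RCLike.re ⟪x, T' x⟫_𝕜 + c * ‖x‖ ^ 2) (j : Fin n) :
    μ j ≤ μ' j + c := by
  have : FiniteDimensional 𝕜 E := b.toBasis.finiteDimensional_of_finite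
  set S := Submodule.span 𝕜 (b '' Set.Ici j)
  set S' := Submodule.span 𝕜 (b' '' Set.Iic j)
  have hdim : Module.finrank 𝕜 E < Module.finrank 𝕜 S + Module.finrank 𝕜 S' := by
    rw [b.finrank_span_image, b'.finrank_span_image, Fintype.card_Ici, Fintype.card_Iic,
      Fin.card_Ici, Fin.card_Iic, Module.finrank_eq_card_basis b.toBasis, Fintype.card_fin]
    omega
  obtain ⟨x, hxS, hxS', hx0⟩ : ∃ x ∈ S, x ∈ S' ∧ x ≠ 0 := by
    by_contra! h
    exact hdim.not_ge
      (Submodule.finrank_add_finrank_le_of_disjoint (Submodule.disjoint_def.mpr h))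
  have hlow := b.mul_norm_sq_le_re_inner_map_self hT (fun i hi => hμ hi) hxS
  have hup := b'.re_inner_map_self_le_mul_norm_sq hT' (fun i hi => hμ' hi) hxS'
  have hx : 0 < ‖x‖ ^ 2 := by positivity
  nlinarith [hc x]

end MinMax

namespace Matrix

lemma re_inner_toEuclideanLin_le {𝕜 ι : Type*} [RCLike 𝕜] [Fintype ι] [DecidableEq ι]
    (A B : Matrix ι ι 𝕜) (x : EuclideanSpace 𝕜 ι) :
    RCLike.re ⟪x, toEuclideanLin A x⟫_𝕜 ≤
      RCLike.re ⟪x, toEuclideanLin B x⟫_𝕜 + ‖A - B‖ * ‖x‖ ^ 2 := by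
  set C := toEuclideanCLM (n := ι) (𝕜 := 𝕜) (A - B)
  have hAB : toEuclideanLin A x = toEuclideanLin B x + C x := by
    rw [← add_sub_cancel B A, map_add, LinearMap.add_apply]
    rfl
  rw [hAB, inner_add_right, map_add, add_le_add_iff_left]
  calc RCLike.re ⟪x, C x⟫_𝕜
      ≤ ‖x‖ * ‖C x‖ := re_inner_le_norm _ _
    _ ≤ ‖x‖ * (‖A - B‖ * ‖x‖) := by gcongr; exact C.le_opNorm x
    _ = ‖A - B‖ * ‖x‖ ^ 2 := by ring

namespace IsHermitian

variable {𝕜 : Type*} [RCLike 𝕜] {n : ℕ} {A B : Matrix (Fin n) (Fin n) 𝕜}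

def sortedEigenvalues (hA : A.IsHermitian) : Fin n → ℝ :=
  hA.eigenvalues ∘ Tuple.sort hA.eigenvalues

def sortedEigenvectorBasis (hA : A.IsHermitian) :
    OrthonormalBasis (Fin n) 𝕜 (EuclideanSpace 𝕜 (Fin n)) :=
  hA.eigenvectorBasis.reindex (Tuple.sort hA.eigenvalues).symm

lemma monotone_sortedEigenvalues (hA : A.IsHermitian) : Monotone hA.sortedEigenvalues :=
  Tuple.monotone_sort _

lemma toEuclideanLin_sortedEigenvectorBasis (hA : A.IsHermitian) (j : Fin n) :
    toEuclideanLin A (hA.sortedEigenvectorBasis j) =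
      (hA.sortedEigenvalues j : 𝕜) • hA.sortedEigenvectorBasis j := by
  rw [sortedEigenvectorBasis, OrthonormalBasis.reindex_apply, Equiv.symm_symm]
  change WithLp.toLp 2 (A *ᵥ (hA.eigenvectorBasis _).ofLp) = _
  rw [hA.mulVec_eigenvectorBasis, RCLike.real_smul_eq_coe_smul (K := 𝕜)]
  rfl

lemma sortedEigenvalues_le_add_norm_sub (hA : A.IsHermitian) (hB : B.IsHermitian) (j : Fin n) :
    hA.sortedEigenvalues j ≤ hB.sortedEigenvalues j + ‖A - B‖ :=
  le_add_of_re_inner_map_self_le hA.monotone_sortedEigenvalues hB.monotone_sortedEigenvalues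
    hA.toEuclideanLin_sortedEigenvectorBasis hB.toEuclideanLin_sortedEigenvectorBasis
    (re_inner_toEuclideanLin_le A B) j

lemma abs_sortedEigenvalues_sub_le (hA : A.IsHermitian) (hB : B.IsHermitian) (j : Fin n) :
    |hA.sortedEigenvalues j - hB.sortedEigenvalues j| ≤ ‖A - B‖ := by
  rw [abs_sub_le_iff]
  constructor
  · linarith [hA.sortedEigenvalues_le_add_norm_sub hB j]
  · linarith [hB.sortedEigenvalues_le_add_norm_sub hA j, norm_sub_rev A B]

end IsHermitian

end Matrix

lemma abs_kthEig_sub_le {n : ℕ} {M M' : Matrix (Fin n) (Fin n) ℂ} (hM : M.IsHermitian)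
    (hM' : M'.IsHermitian) (k : ℕ) : |kthEig M k - kthEig M' k| ≤ ‖M - M'‖ := by
  unfold kthEig
  rw [dif_pos hM, dif_pos hM']
  split_ifs
  · exact hM.abs_sortedEigenvalues_sub_le hM' _
  · simp

lemma isHermitian_ReM {n : ℕ} (A : Matrix (Fin n) (Fin n) ℂ) : (ReM A).IsHermitian := by
  simp [ReM, Matrix.IsHermitian, conjTranspose_smul, add_comm]

lemma isHermitian_ImM {n : ℕ} (A : Matrix (Fin n) (Fin n) ℂ) : (ImM A).IsHermitian := by
  rw [ImM, Matrix.IsHermitian, conjTranspose_smul, conjTranspose_sub, conjTranspose_conjTranspose,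
    show star ((2 * Complex.I)⁻¹) = -(2 * Complex.I)⁻¹ by simp]
  module

lemma isHermitian_smul_ReM_add_smul_ImM {n : ℕ} (A : Matrix (Fin n) (Fin n) ℂ) (x y : ℝ) :
    ((x : ℂ) • ReM A + (y : ℂ) • ImM A).IsHermitian :=
  (IsSelfAdjoint.smul (Complex.conj_ofReal x) (isHermitian_ReM A)).add
    (IsSelfAdjoint.smul (Complex.conj_ofReal y) (isHermitian_ImM A))

lemma lipschitzWith_lamXY {n : ℕ} (A : Matrix (Fin n) (Fin n) ℂ) (k : ℕ) :
    LipschitzWith (‖ReM A‖₊ + ‖ImM A‖₊) (fun w : ℝ × ℝ => lamXY A k w.1 w.2) := by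
  refine LipschitzWith.of_dist_le_mul fun w w' => ?_
  have hsub : ((w.1 : ℂ) • ReM A + (w.2 : ℂ) • ImM A) - ((w'.1 : ℂ) • ReM A + (w'.2 : ℂ) • ImM A)
      = (((w - w').1 : ℝ) : ℂ) • ReM A + (((w - w').2 : ℝ) : ℂ) • ImM A := by
    simp only [Prod.fst_sub, Prod.snd_sub, Complex.ofReal_sub]
    module
  calc dist (lamXY A k w.1 w.2) (lamXY A k w'.1 w'.2)
      ≤ ‖(((w - w').1 : ℝ) : ℂ) • ReM A + (((w - w').2 : ℝ) : ℂ) • ImM A‖ := by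
        rw [Real.dist_eq, ← hsub]
        exact abs_kthEig_sub_le (isHermitian_smul_ReM_add_smul_ImM A _ _)
          (isHermitian_smul_ReM_add_smul_ImM A _ _) k
    _ ≤ ‖(w - w').1‖ * ‖ReM A‖ + ‖(w - w').2‖ * ‖ImM A‖ := by
        refine (norm_add_le _ _).trans ?_
        rw [norm_smul, norm_smul, Complex.norm_real, Complex.norm_real]
    _ ≤ ‖w - w'‖ * ‖ReM A‖ + ‖w - w'‖ * ‖ImM A‖ := by
        gcongr
        exacts [norm_fst_le _, norm_snd_le _]
    _ = ↑(‖ReM A‖₊ + ‖ImM A‖₊) * dist w w' := by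
        rw [dist_eq_norm, NNReal.coe_add, coe_nnnorm, coe_nnnorm]
        ring

open MvPolynomial in
theorem MvPolynomial.hasFDerivAt_eval {𝕜 σ : Type*} [NontriviallyNormedField 𝕜] [Fintype σ]
    (f : MvPolynomial σ 𝕜) (v₀ : σ → 𝕜) :
    HasFDerivAt (fun v => eval v f)
      (∑ i, eval v₀ (pderiv i f) • ContinuousLinearMap.proj (R := 𝕜) (φ := fun _ : σ => 𝕜) i)
      v₀ := by
  classical
  induction f using MvPolynomial.induction_on with
  | C a =>
    simp only [eval_C]
    refine (hasFDerivAt_const (𝕜 := 𝕜) a v₀).congr_fderiv ?_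
    ext v
    simp
  | add p q hp hq =>
    simp only [map_add]
    refine (hp.add hq).congr_fderiv ?_
    ext v
    simp [add_mul, Finset.sum_add_distrib]
  | mul_X p i hp =>
    simp only [map_mul, eval_X]
    refine (hp.mul (hasFDerivAt_apply i v₀)).congr_fderiv ?_
    ext v
    simp [Derivation.leibniz, pderiv_X, Pi.single_apply, apply_ite (eval v₀), mul_add,
      Finset.sum_add_distrib, Finset.mul_sum, mul_comm, mul_left_comm]

theorem hasFDerivAt_of_implicit {E : Type*} [NormedAddCommGroup E] [NormedSpace ℝ E]
    {Φ : ℝ × E → ℝ} {Φ' : ℝ × E →L[ℝ] ℝ} {g : E → ℝ} {K : NNReal} {w₀ : E}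
    (hΦ : HasFDerivAt Φ Φ' (g w₀, w₀)) (hΦg : ∀ w, Φ (g w, w) = 0) (hg : LipschitzWith K g)
    (ht : Φ' (1, 0) ≠ 0) :
    HasFDerivAt g (-(Φ' (1, 0))⁻¹ • Φ'.comp (ContinuousLinearMap.inr ℝ ℝ E)) w₀ := by
  have hgO : (fun w => g w - g w₀) =O[𝓝 w₀] fun w => w - w₀ :=
    .of_bound K (.of_forall fun w => by simpa [dist_eq_norm] using hg.dist_le_mul w w₀)
  have hgraph : Filter.Tendsto (fun w => (g w, w)) (𝓝 w₀) (𝓝 (g w₀, w₀)) :=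
    (hg.continuous.prodMk continuous_id).tendsto w₀
  have hlin : (fun w => Φ' (g w - g w₀, w - w₀)) =o[𝓝 w₀] fun w => w - w₀ := by
    have := ((hasFDerivAt_iff_isLittleO.mp hΦ).comp_tendsto hgraph).trans_isBigO
      (hgO.prod_left (Asymptotics.isBigO_refl _ _))
    simpa only [Function.comp_def, hΦg, sub_zero, zero_sub, neg_neg, Prod.mk_sub_mk]
      using this.neg_left
  refine hasFDerivAt_iff_isLittleO.mpr
    ((hlin.const_mul_left (Φ' (1, 0))⁻¹).congr_left fun w => ?_)
  have hsplit : Φ' (g w - g w₀, w - w₀) = (g w - g w₀) * Φ' (1, 0) + Φ' (0, w - w₀) := by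
    rw [← smul_eq_mul, ← map_smul, ← map_add, Prod.smul_mk, smul_eq_mul, mul_one, smul_zero,
      Prod.mk_add_mk, add_zero, zero_add]
  simp only [hsplit, FunLike.coe_smul, Pi.smul_apply, ContinuousLinearMap.comp_apply,
    ContinuousLinearMap.inr_apply, smul_eq_mul]
  field_simp
  ring

open MvPolynomial in
theorem stmt6_general {n k : ℕ}
    (A : Matrix (Fin n) (Fin n) ℂ)
    (f : MvPolynomial (Fin 3) ℝ)
    (hf : ∀ x y : ℝ, eval ![lamXY A k x y, -x, -y] f = 0)
    (x₀ y₀ : ℝ)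
    (hden : eval ![lamXY A k x₀ y₀, -x₀, -y₀] (pderiv (0 : Fin 3) f) ≠ 0) :
    ∃ L : ℝ × ℝ →L[ℝ] ℝ,
      HasFDerivAt (fun p : ℝ × ℝ => lamXY A k p.1 p.2) L (x₀, y₀) ∧
      L (1, 0) = eval ![lamXY A k x₀ y₀, -x₀, -y₀] (pderiv (1 : Fin 3) f) /
        eval ![lamXY A k x₀ y₀, -x₀, -y₀] (pderiv (0 : Fin 3) f) ∧
      L (0, 1) = eval ![lamXY A k x₀ y₀, -x₀, -y₀] (pderiv (2 : Fin 3) f) /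
        eval ![lamXY A k x₀ y₀, -x₀, -y₀] (pderiv (0 : Fin 3) f) := by
  obtain ⟨e, he⟩ : ∃ e : ℝ × (ℝ × ℝ) →L[ℝ] (Fin 3 → ℝ), ∀ u, e u = ![u.1, -u.2.1, -u.2.2] :=
    ⟨.pi ![ContinuousLinearMap.fst ℝ ℝ (ℝ × ℝ),
        -(ContinuousLinearMap.fst ℝ ℝ ℝ).comp (ContinuousLinearMap.snd ℝ ℝ (ℝ × ℝ)),
        -(ContinuousLinearMap.snd ℝ ℝ ℝ).comp (ContinuousLinearMap.snd ℝ ℝ (ℝ × ℝ))],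
      fun u => by ext i; fin_cases i <;> rfl⟩
  have hΦ := (hasFDerivAt_eval f (e (lamXY A k x₀ y₀, (x₀, y₀)))).comp _ e.hasFDerivAt
  have hg := hasFDerivAt_of_implicit (g := fun w : ℝ × ℝ => lamXY A k w.1 w.2) (w₀ := (x₀, y₀))
    hΦ (fun w => by simpa only [Function.comp_apply, he] using hf w.1 w.2)
    (lipschitzWith_lamXY A k) (by simpa [he, Fin.sum_univ_three] using hden)
  exact ⟨_, hg, by simp [he, Fin.sum_univ_three, div_eq_inv_mul],
    by simp [he, Fin.sum_univ_three, div_eq_inv_mul]⟩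

open MvPolynomial in
/-- If `f ∈ ℝ[t,x,y]` vanishes along `(λ_k(x,y), -x, -y)` and
`∂f/∂t` is nonzero at `p = (λ_k(x*,y*), -x*, -y*)`, then `(x,y) ↦ λ_k(x,y)` is
differentiable at `(x*,y*)` with the stated partial derivatives. -/
theorem stmt6 {n k : ℕ} (hk1 : 1 ≤ k) (hkn : k ≤ n)
    (A : Matrix (Fin n) (Fin n) ℂ)
    (f : MvPolynomial (Fin 3) ℝ)
    (hf : ∀ x y : ℝ, eval ![lamXY A k x y, -x, -y] f = 0)
    (x₀ y₀ : ℝ)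
    (hden : eval ![lamXY A k x₀ y₀, -x₀, -y₀] (pderiv (0 : Fin 3) f) ≠ 0) :
    ∃ L : ℝ × ℝ →L[ℝ] ℝ,
      HasFDerivAt (fun p : ℝ × ℝ => lamXY A k p.1 p.2) L (x₀, y₀) ∧
      L (1, 0) = eval ![lamXY A k x₀ y₀, -x₀, -y₀] (pderiv (1 : Fin 3) f) /
        eval ![lamXY A k x₀ y₀, -x₀, -y₀] (pderiv (0 : Fin 3) f) ∧
      L (0, 1) = eval ![lamXY A k x₀ y₀, -x₀, -y₀] (pderiv (2 : Fin 3) f) /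
        eval ![lamXY A k x₀ y₀, -x₀, -y₀] (pderiv (0 : Fin 3) f) :=
  stmt6_general A f hf x₀ y₀ hden
end
end

section
/- Let 1 ≤ k ≤ n and A ∈ ℂ^{n×n}. Let S = {(p₀,p₁,p₂) ∈ ℝ³ : (p₁,p₂) ≠ (0,0) and −p₀ = λ_k(p₁,p₂) = λ_{n−k+1}(p₁,p₂)} and let V = span_ℝ(S) ⊆ ℝ³. Then for every a + ib ∈ Λ_k(A) and every (t,x,y) ∈ V one has t + ax + by = 0. Consequently, if dim V = 3 then Λ_k(A) = ∅, and if dim V = 2 then Λ_k(A) contains at most one point. -/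
open Matrix

noncomputable section

/-- The set `S = {(p₀,p₁,p₂) : (p₁,p₂) ≠ (0,0), −p₀ = λ_k(p₁,p₂) = λ_{n−k+1}(p₁,p₂)}`. -/
def antipodalSet {n : ℕ} (A : Matrix (Fin n) (Fin n) ℂ) (k : ℕ) : Set (Fin 3 → ℝ) :=
  {p | (p 1, p 2) ≠ (0, 0) ∧ -(p 0) = lamXY A k (p 1) (p 2) ∧
    lamXY A k (p 1) (p 2) = lamXY A (n - k + 1) (p 1) (p 2)}

/-!
For `z = a + ib ∈ Λ_k(A)` the halfplane inequalities, made homogeneous, say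
`a x + b y ≤ λ_k(x, y)` for all `(x, y)`. Since `λ_k(-H) = -λ_{n-k+1}(H)`, the same
inequality at `(-x, -y)` gives `λ_{n-k+1}(x, y) ≤ a x + b y`. At a point of `S` both bounds
equal `-p₀`, so the nonzero functional `(t, x, y) ↦ t + a x + b y` vanishes on `S`, hence on `V`.
Its kernel is a plane which determines `z`, whence the dimension statements.
-/

namespace Tuple

variable {n : ℕ} {α β : Type*} [LinearOrder α] [LinearOrder β]

theorem comp_sort_eq_of_map_eq {f g : Fin n → α}
    (h : Finset.univ.val.map f = Finset.univ.val.map g) : f ∘ sort f = g ∘ sort g := by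
  rw [Fin.univ_val_map, Fin.univ_val_map, Multiset.coe_eq_coe] at h
  refine List.ofFn_injective <| List.Perm.eq_of_sortedLE
    (List.sortedLE_ofFn_iff.2 (monotone_sort f)) (List.sortedLE_ofFn_iff.2 (monotone_sort g)) ?_
  exact ((Equiv.Perm.ofFn_comp_perm _ f).trans h).trans (Equiv.Perm.ofFn_comp_perm _ g).symm

theorem comp_sort_comp_of_monotone {φ : α → β} (hφ : Monotone φ) (g : Fin n → α) :
    (φ ∘ g) ∘ sort (φ ∘ g) = φ ∘ g ∘ sort g :=
  (comp_sort_eq_comp_iff_monotone.mpr (hφ.comp (monotone_sort g))).symm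

theorem comp_sort_comp_of_antitone {φ : α → β} (hφ : Antitone φ) (g : Fin n → α) :
    (φ ∘ g) ∘ sort (φ ∘ g) = φ ∘ g ∘ sort g ∘ Fin.rev := by
  have hmono : Monotone ((φ ∘ g) ∘ (Fin.revPerm.trans (sort g))) :=
    fun a b hab => hφ (monotone_sort g (Fin.rev_le_rev.mpr hab))
  exact (comp_sort_eq_comp_iff_monotone.mpr hmono).symm

end Tuple

namespace Matrix.IsHermitian

variable {ι 𝕜 : Type*} [Fintype ι] [DecidableEq ι] [RCLike 𝕜] {M : Matrix ι ι 𝕜}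

theorem map_eigenvalues_cfc (hM : M.IsHermitian) (f : ℝ → ℝ) (hf : (cfc f M).IsHermitian) :
    Finset.univ.val.map hf.eigenvalues = Finset.univ.val.map (f ∘ hM.eigenvalues) := by
  apply Multiset.map_injective (RCLike.ofReal_injective (K := 𝕜))
  rw [Multiset.map_map, Multiset.map_map, ← hf.roots_charpoly_eq_eigenvalues,
    hM.charpoly_cfc_eq, Polynomial.roots_prod _ _ (by
      simp [Finset.prod_ne_zero_iff, Polynomial.X_sub_C_ne_zero])]
  simp [Function.comp_def]

end Matrix.IsHermitian

section kthEig

variable {n k : ℕ} {M : Matrix (Fin n) (Fin n) ℂ}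

theorem kthEig_cfc_of_monotone (hM : M.IsHermitian) {f : ℝ → ℝ} (hf : Monotone f)
    (hk1 : 1 ≤ k) (hkn : k ≤ n) : kthEig (cfc f M) k = f (kthEig M k) := by
  have hN : (cfc f M).IsHermitian := (cfc_predicate f M).isHermitian
  have hk : n - k < n := by omega
  rw [kthEig, kthEig, dif_pos hN, dif_pos hM, dif_pos hk, dif_pos hk,
    Tuple.comp_sort_eq_of_map_eq (hM.map_eigenvalues_cfc f hN),
    Tuple.comp_sort_comp_of_monotone hf]
  rfl

theorem kthEig_cfc_of_antitone (hM : M.IsHermitian) {f : ℝ → ℝ} (hf : Antitone f)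
    (hk1 : 1 ≤ k) (hkn : k ≤ n) : kthEig (cfc f M) k = f (kthEig M (n - k + 1)) := by
  have hN : (cfc f M).IsHermitian := (cfc_predicate f M).isHermitian
  have hk : n - k < n := by omega
  have hk' : n - (n - k + 1) < n := by omega
  have hrev : Fin.rev ⟨n - k, hk⟩ = ⟨n - (n - k + 1), hk'⟩ := by
    ext
    simp only [Fin.val_rev]
  rw [kthEig, kthEig, dif_pos hN, dif_pos hM, dif_pos hk, dif_pos hk',
    Tuple.comp_sort_eq_of_map_eq (hM.map_eigenvalues_cfc f hN),
    Tuple.comp_sort_comp_of_antitone hf]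
  simp only [Function.comp_apply, hrev]

theorem kthEig_smul (hM : M.IsHermitian) {c : ℝ} (hc : 0 ≤ c) (hk1 : 1 ≤ k) (hkn : k ≤ n) :
    kthEig (c • M) k = c * kthEig M k := by
  rw [← cfc_const_mul_id c M hM.isSelfAdjoint,
    kthEig_cfc_of_monotone hM (fun _ _ h => mul_le_mul_of_nonneg_left h hc) hk1 hkn]

theorem kthEig_neg (hM : M.IsHermitian) (hk1 : 1 ≤ k) (hkn : k ≤ n) :
    kthEig (-M) k = -kthEig M (n - k + 1) := by
  rw [← cfc_neg_id (R := ℝ) (a := M) hM.isSelfAdjoint,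
    kthEig_cfc_of_antitone hM (fun _ _ h => neg_le_neg h) hk1 hkn]

end kthEig

section lamXY

variable {n k : ℕ} (A : Matrix (Fin n) (Fin n) ℂ)

theorem ReM_eq_realPart : ReM A = realPart A := by
  rw [realPart_apply_coe, ReM, ← Complex.coe_smul]
  simp [star_eq_conjTranspose]

theorem ImM_eq_imaginaryPart : ImM A = imaginaryPart A := by
  rw [imaginaryPart_apply_coe, ImM, ← Complex.coe_smul, smul_smul, star_eq_conjTranspose]
  congr 1
  field_simp
  simp

theorem isHermitian_pencil (x y : ℝ) : ((x : ℂ) • ReM A + (y : ℂ) • ImM A).IsHermitian := by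
  rw [Complex.coe_smul, Complex.coe_smul, ReM_eq_realPart, ImM_eq_imaginaryPart]
  exact (((IsSelfAdjoint.all x).smul (realPart A).2).add
    ((IsSelfAdjoint.all y).smul (imaginaryPart A).2)).isHermitian

theorem lamXY_mul (hk1 : 1 ≤ k) (hkn : k ≤ n) {r : ℝ} (hr : 0 ≤ r) (x y : ℝ) :
    lamXY A k (r * x) (r * y) = r * lamXY A k x y := by
  have hpencil : ((r * x : ℝ) : ℂ) • ReM A + ((r * y : ℝ) : ℂ) • ImM A =
      r • ((x : ℂ) • ReM A + (y : ℂ) • ImM A) := by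
    rw [← Complex.coe_smul, Complex.ofReal_mul, Complex.ofReal_mul, smul_add, smul_smul, smul_smul]
  rw [lamXY, lamXY, hpencil, kthEig_smul (isHermitian_pencil A x y) hr hk1 hkn]

theorem lamXY_neg (hk1 : 1 ≤ k) (hkn : k ≤ n) (x y : ℝ) :
    lamXY A k (-x) (-y) = -lamXY A (n - k + 1) x y := by
  have hpencil : ((-x : ℝ) : ℂ) • ReM A + ((-y : ℝ) : ℂ) • ImM A =
      -((x : ℂ) • ReM A + (y : ℂ) • ImM A) := by
    rw [Complex.ofReal_neg, Complex.ofReal_neg, neg_smul, neg_smul, neg_add]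
  rw [lamXY, lamXY, hpencil, kthEig_neg (isHermitian_pencil A x y) hk1 hkn]

variable {A} {z : ℂ}

theorem le_lamXY_of_mem_numRange (hk1 : 1 ≤ k) (hkn : k ≤ n) (hz : z ∈ NumRange A k)
    (x y : ℝ) : z.re * x + z.im * y ≤ lamXY A k x y := by
  set w : ℂ := ⟨x, y⟩
  have hx : x = ‖w‖ * Real.cos w.arg := (Complex.norm_mul_cos_arg w).symm
  have hy : y = ‖w‖ * Real.sin w.arg := (Complex.norm_mul_sin_arg w).symm
  calc z.re * x + z.im * y = ‖w‖ * (z.re * Real.cos w.arg + z.im * Real.sin w.arg) := by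
        rw [hx, hy]; ring
    _ ≤ ‖w‖ * lamTheta A k w.arg := mul_le_mul_of_nonneg_left (hz _) (norm_nonneg w)
    _ = lamXY A k x y := by rw [lamTheta, ← lamXY_mul A hk1 hkn (norm_nonneg w), ← hx, ← hy]

theorem lamXY_le_of_mem_numRange (hk1 : 1 ≤ k) (hkn : k ≤ n) (hz : z ∈ NumRange A k)
    (x y : ℝ) : lamXY A (n - k + 1) x y ≤ z.re * x + z.im * y := by
  have h := le_lamXY_of_mem_numRange hk1 hkn hz (-x) (-y)
  rw [lamXY_neg A hk1 hkn] at h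
  linarith

end lamXY

def pointFunctional (z : ℂ) : (Fin 3 → ℝ) →ₗ[ℝ] ℝ :=
  LinearMap.proj 0 + z.re • LinearMap.proj 1 + z.im • LinearMap.proj 2

@[simp]
theorem pointFunctional_apply (z : ℂ) (v : Fin 3 → ℝ) :
    pointFunctional z v = v 0 + z.re * v 1 + z.im * v 2 := by
  simp [pointFunctional]

theorem finrank_ker_pointFunctional_lt (z : ℂ) :
    Module.finrank ℝ (LinearMap.ker (pointFunctional z)) < 3 := by
  have hne : LinearMap.ker (pointFunctional z) ≠ ⊤ := fun h => by
    simpa using LinearMap.congr_fun (LinearMap.ker_eq_top.mp h) ![1, 0, 0]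
  simpa using Submodule.finrank_lt hne

theorem eq_of_ker_pointFunctional_eq {z z' : ℂ}
    (h : LinearMap.ker (pointFunctional z) = LinearMap.ker (pointFunctional z')) : z = z' := by
  have hmem : ∀ v, pointFunctional z v = 0 → pointFunctional z' v = 0 := fun v hv =>
    (SetLike.ext_iff.mp h v).mp hv
  have hre := hmem ![-z.re, 1, 0] (by simp)
  have him := hmem ![-z.im, 0, 1] (by simp)
  simp only [pointFunctional_apply, Matrix.cons_val] at hre him
  exact Complex.ext (by linarith) (by linarith)

theorem span_antipodalSet_le_ker {n k : ℕ} (hk1 : 1 ≤ k) (hkn : k ≤ n)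
    {A : Matrix (Fin n) (Fin n) ℂ} {z : ℂ} (hz : z ∈ NumRange A k) :
    Submodule.span ℝ (antipodalSet A k) ≤ LinearMap.ker (pointFunctional z) := by
  rw [Submodule.span_le]
  rintro p ⟨-, hk, hnk⟩
  have hupper := le_lamXY_of_mem_numRange hk1 hkn hz (p 1) (p 2)
  have hlower := lamXY_le_of_mem_numRange hk1 hkn hz (p 1) (p 2)
  simp only [SetLike.mem_coe, LinearMap.mem_ker, pointFunctional_apply]
  linarith

/-- Every element of `Λ_k(A)` annihilates (via `t + ax + by`) every
vector of `V = span ℝ S`. Consequently `dim V = 3` forces `Λ_k(A) = ∅` and `dim V = 2`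
forces `Λ_k(A)` to have at most one point. -/
theorem stmt13 {n k : ℕ} (hk1 : 1 ≤ k) (hkn : k ≤ n)
    (A : Matrix (Fin n) (Fin n) ℂ) :
    (∀ z ∈ NumRange A k, ∀ v ∈ Submodule.span ℝ (antipodalSet A k),
      v 0 + z.re * v 1 + z.im * v 2 = 0) ∧
    (Module.finrank ℝ (Submodule.span ℝ (antipodalSet A k)) = 3 → NumRange A k = ∅) ∧
    (Module.finrank ℝ (Submodule.span ℝ (antipodalSet A k)) = 2 →
      (NumRange A k).Subsingleton) := by
  have hV := fun z (hz : z ∈ NumRange A k) => span_antipodalSet_le_ker hk1 hkn hz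
  refine ⟨fun z hz v hv => by simpa using hV z hz hv, fun h3 => ?_, fun h2 z hz z' hz' => ?_⟩
  · refine Set.eq_empty_of_forall_notMem fun z hz => ?_
    have := (Submodule.finrank_mono (hV z hz)).trans_lt (finrank_ker_pointFunctional_lt z)
    omega
  · have hspan : ∀ w ∈ NumRange A k,
        Submodule.span ℝ (antipodalSet A k) = LinearMap.ker (pointFunctional w) :=
      fun w hw => Submodule.eq_of_le_of_finrank_le (hV w hw)
        (by have := finrank_ker_pointFunctional_lt w; omega)
    exact eq_of_ker_pointFunctional_eq ((hspan z hz).symm.trans (hspan z' hz'))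

end
end
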